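/- Let 0 < C < 1. Define L_B(η) = (2/√(1−C²))·artanh η + 2·artanh C and L_E(η) = 2·( (1/√(1−C²))·artanh √(2η(1−C²)/(C²+2η−3C²η)) − artanh √(2η(1−C²)²/(C²+2η−3C²η)) ). Then lim_{η→1⁻} ( L_B(η) − L_E(η) ) = (2/√(1−C²))·ln( C/(2√(1−C²)) ) + 2·artanh √(1−C²) + 2·artanh C. -/

import Mathlib

/-!
Write `D(η) = C² + 2η - 3C²η`, `u(η) = √(2η(1-C²)/D(η))` and `v(η) = √(2η(1-C²)²/D(η))`, so that
`L_B - L_E = (2/√(1-C²)) (artanh η - artanh u) + 2 artanh v + 2 artanh C`. Both `artanh η` and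
`artanh u` blow up as `η → 1⁻` (since `u(1) = 1`), but `1 - u² = C²(1-η)/D`, so
`artanh η - artanh u = ½ log ((1+η) C² / (D (1+u)²))`, which is continuous at `η = 1` with value
`log (C / (2√(1-C²)))`. The remaining terms are continuous at `η = 1`, with `v(1) = √(1-C²)`.
-/

open Filter Topology

noncomputable def artanh (x : ℝ) : ℝ := Real.log ((1 + x) / (1 - x)) / 2

lemma continuousAt_artanh {x : ℝ} (hx : |x| < 1) : ContinuousAt artanh x := by
  obtain ⟨hx₁, hx₂⟩ := abs_lt.mp hx
  have hquot : ContinuousAt (fun x : ℝ => (1 + x) / (1 - x)) x :=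
    (continuousAt_const.add continuousAt_id).div (continuousAt_const.sub continuousAt_id)
      (by linarith)
  exact (hquot.log (div_pos (by linarith) (by linarith)).ne').div_const 2

lemma artanh_sub_artanh {x y : ℝ} (hx : |x| < 1) (hy : |y| < 1) :
    artanh x - artanh y = Real.log ((1 + x) * (1 - y) / ((1 - x) * (1 + y))) / 2 := by
  obtain ⟨hx₁, hx₂⟩ := abs_lt.mp hx
  obtain ⟨hy₁, hy₂⟩ := abs_lt.mp hy
  unfold artanh
  rw [← sub_div, ← Real.log_div (div_pos (by linarith) (by linarith)).ne'
    (div_pos (by linarith) (by linarith)).ne']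
  congr 2
  field_simp

namespace EllipticDisk

variable {C η : ℝ}

noncomputable def denom (C η : ℝ) : ℝ := C ^ 2 + 2 * η - 3 * C ^ 2 * η

noncomputable def arg₁ (C η : ℝ) : ℝ := Real.sqrt (2 * η * (1 - C ^ 2) / denom C η)

noncomputable def arg₂ (C η : ℝ) : ℝ := Real.sqrt (2 * η * (1 - C ^ 2) ^ 2 / denom C η)

lemma denom_one (C : ℝ) : denom C 1 = 2 * (1 - C ^ 2) := by
  unfold denom; ring

lemma denom_pos (hC : C ^ 2 < 1) (hη₀ : 0 < η) (hη₁ : η ≤ 1) : 0 < denom C η := by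
  have : denom C η = C ^ 2 * (1 - η) + 2 * η * (1 - C ^ 2) := by unfold denom; ring
  rw [this]
  have : 0 ≤ C ^ 2 * (1 - η) := mul_nonneg (sq_nonneg C) (by linarith)
  have : 0 < 2 * η * (1 - C ^ 2) := by nlinarith
  linarith

lemma arg₁_one (hC : C ^ 2 < 1) : arg₁ C 1 = 1 := by
  have : 1 - C ^ 2 ≠ 0 := by linarith
  rw [arg₁, denom_one]
  field_simp
  exact Real.sqrt_one

lemma arg₂_one (hC : C ^ 2 < 1) : arg₂ C 1 = Real.sqrt (1 - C ^ 2) := by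
  have : 1 - C ^ 2 ≠ 0 := by linarith
  rw [arg₂, denom_one]
  congr 1
  field_simp

lemma one_sub_arg₁_sq (hC : C ^ 2 < 1) (hη₀ : 0 < η) (hη₁ : η ≤ 1) :
    1 - arg₁ C η ^ 2 = C ^ 2 * (1 - η) / denom C η := by
  have hD := denom_pos hC hη₀ hη₁
  rw [arg₁, Real.sq_sqrt (div_nonneg (by nlinarith) hD.le)]
  field_simp
  unfold denom
  ring

lemma arg₁_lt_one (hC₀ : C ≠ 0) (hC : C ^ 2 < 1) (hη₀ : 0 < η) (hη₁ : η < 1) :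
    arg₁ C η < 1 := by
  have h := one_sub_arg₁_sq hC hη₀ hη₁.le
  have : 0 < C ^ 2 * (1 - η) / denom C η :=
    div_pos (mul_pos (by positivity) (by linarith)) (denom_pos hC hη₀ hη₁.le)
  have hu₀ : 0 ≤ arg₁ C η := Real.sqrt_nonneg _
  nlinarith

lemma artanh_sub_artanh_arg₁ (hC₀ : C ≠ 0) (hC : C ^ 2 < 1) (hη₀ : 0 < η) (hη₁ : η < 1) :
    artanh η - artanh (arg₁ C η) =
      Real.log ((1 + η) * C ^ 2 / (denom C η * (1 + arg₁ C η) ^ 2)) / 2 := by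
  have hu₀ : 0 ≤ arg₁ C η := Real.sqrt_nonneg _
  have hu₁ := arg₁_lt_one hC₀ hC hη₀ hη₁
  have hD := denom_pos hC hη₀ hη₁.le
  have hsq := one_sub_arg₁_sq hC hη₀ hη₁.le
  rw [artanh_sub_artanh (abs_lt.mpr ⟨by linarith, hη₁⟩) (abs_lt.mpr ⟨by linarith, hu₁⟩)]
  congr 2
  have : 1 - η ≠ 0 := by linarith
  field_simp
  rw [eq_div_iff hD.ne'] at hsq
  linear_combination hsq

lemma continuousAt_arg₁ (hC : C ^ 2 < 1) : ContinuousAt (arg₁ C) 1 := by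
  have hD : denom C 1 ≠ 0 := (denom_pos hC one_pos le_rfl).ne'
  exact ((by fun_prop : ContinuousAt (fun η : ℝ => 2 * η * (1 - C ^ 2)) 1).div
    (by unfold denom; fun_prop) hD).sqrt

lemma continuousAt_arg₂ (hC : C ^ 2 < 1) : ContinuousAt (arg₂ C) 1 := by
  have hD : denom C 1 ≠ 0 := (denom_pos hC one_pos le_rfl).ne'
  exact ((by fun_prop : ContinuousAt (fun η : ℝ => 2 * η * (1 - C ^ 2) ^ 2) 1).div
    (by unfold denom; fun_prop) hD).sqrt

lemma tendsto_artanh_sub_artanh_arg₁ (hC₀ : C ≠ 0) (hC : C ^ 2 < 1) :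
    Tendsto (fun η => artanh η - artanh (arg₁ C η)) (𝓝[<] 1)
      (𝓝 (Real.log (C / (2 * Real.sqrt (1 - C ^ 2))))) := by
  set F : ℝ → ℝ := fun η => Real.log ((1 + η) * C ^ 2 / (denom C η * (1 + arg₁ C η) ^ 2)) / 2
  have hF₁ : F 1 = Real.log (C / (2 * Real.sqrt (1 - C ^ 2))) := by
    have ht : Real.sqrt (1 - C ^ 2) ^ 2 = 1 - C ^ 2 := Real.sq_sqrt (by linarith)
    have : (1 + 1) * C ^ 2 / (denom C 1 * (1 + arg₁ C 1) ^ 2) =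
        (C / (2 * Real.sqrt (1 - C ^ 2))) ^ 2 := by
      have : 1 - C ^ 2 ≠ 0 := by linarith
      rw [arg₁_one hC, denom_one, div_pow, mul_pow, ht]
      field_simp
      ring
    simp only [F, this, Real.log_pow]
    ring
  have hF : ContinuousAt F 1 := by
    have hD : 0 < denom C 1 := denom_pos hC one_pos le_rfl
    have hu := continuousAt_arg₁ hC
    have hpos : 0 < denom C 1 * (1 + arg₁ C 1) ^ 2 := by rw [arg₁_one hC]; positivity
    have harg : 0 < (1 + 1) * C ^ 2 / (denom C 1 * (1 + arg₁ C 1) ^ 2) :=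
      div_pos (mul_pos (by norm_num) (sq_pos_of_ne_zero hC₀)) hpos
    have hquot : ContinuousAt (fun η => (1 + η) * C ^ 2 / (denom C η * (1 + arg₁ C η) ^ 2)) 1 :=
      (by fun_prop : ContinuousAt (fun η : ℝ => (1 + η) * C ^ 2) 1).div
      (((by unfold denom; fun_prop) : ContinuousAt (denom C) 1).mul
        ((continuousAt_const.add hu).pow 2)) hpos.ne'
    exact (hquot.log harg.ne').div_const 2
  rw [← hF₁]
  refine hF.continuousWithinAt.tendsto.congr' ?_
  filter_upwards [Ioo_mem_nhdsLT one_pos] with η hη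
  exact (artanh_sub_artanh_arg₁ hC₀ hC hη.1 hη.2).symm

lemma tendsto_artanh_arg₂ (hC₀ : C ≠ 0) (hC : C ^ 2 < 1) :
    Tendsto (fun η => artanh (arg₂ C η)) (𝓝[<] 1) (𝓝 (artanh (Real.sqrt (1 - C ^ 2)))) := by
  have ht : |Real.sqrt (1 - C ^ 2)| < 1 := by
    rw [abs_of_nonneg (Real.sqrt_nonneg _), Real.sqrt_lt' one_pos]
    nlinarith [sq_pos_of_ne_zero hC₀]
  rw [← arg₂_one hC] at ht ⊢
  exact ((continuousAt_artanh ht).comp (continuousAt_arg₂ hC)).continuousWithinAt.tendsto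

end EllipticDisk

open EllipticDisk in
theorem circumference_difference_limit (C : ℝ) (hC0 : 0 < C) (hC1 : C < 1)
    (LB LE : ℝ → ℝ)
    (hLB : ∀ η, LB η = 2 / Real.sqrt (1 - C ^ 2) * artanh η + 2 * artanh C)
    (hLE : ∀ η, LE η = 2 * ((1 / Real.sqrt (1 - C ^ 2)) *
          artanh (Real.sqrt (2 * η * (1 - C ^ 2) / (C ^ 2 + 2 * η - 3 * C ^ 2 * η))) -
        artanh (Real.sqrt (2 * η * (1 - C ^ 2) ^ 2 / (C ^ 2 + 2 * η - 3 * C ^ 2 * η))))) :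
    Tendsto (fun η => LB η - LE η) (nhdsWithin 1 (Set.Iio 1))
      (nhds (2 / Real.sqrt (1 - C ^ 2) * Real.log (C / (2 * Real.sqrt (1 - C ^ 2))) +
        2 * artanh (Real.sqrt (1 - C ^ 2)) + 2 * artanh C)) := by
  have hC : C ^ 2 < 1 := by nlinarith
  have hdiff : (fun η => LB η - LE η) = fun η =>
      2 / Real.sqrt (1 - C ^ 2) * (artanh η - artanh (arg₁ C η)) + 2 * artanh (arg₂ C η) +
        2 * artanh C := by
    ext η
    rw [hLB, hLE, arg₁, arg₂, denom]
    ring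
  rw [hdiff]
  exact (((tendsto_artanh_sub_artanh_arg₁ hC0.ne' hC).const_mul _).add
    ((tendsto_artanh_arg₂ hC0.ne' hC).const_mul 2)).add_const _
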